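/- Let A be a commutative complex Hausdorff topological algebra whose topology is induced by a family of uniform seminorms, and suppose A is a Q-algebra (its set of quasi-invertible elements is open). Then there is a uniform norm on A inducing the topology of A; in particular A is a uniform normed algebra. -/

import Mathlib

/-!
For a uniform seminorm `p` and `x` with `p x ≠ 0`, the square property makes the spectral radius
of `x` in the Banach algebra obtained from `(A, p)` (separation quotient, unitization, completion)
equal to `p x`, so there is `z : ℂ` with `‖z‖ = p x` and `z⁻¹ • x` not quasi-invertible. Openness
of the quasi-invertible elements at `0` gives a finite supremum `q` of the family whose `ε`-ball
consists of quasi-invertible elements; then `q (z⁻¹ • x) ≥ ε`, i.e. `ε * p ≤ q`. So `q` dominates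
every seminorm of the family: it induces the topology, it is a norm because the topology is
Hausdorff, and it inherits submultiplicativity and the square property from the family.
-/

open UniformSpace
open scoped NNReal ENNReal

/-- `x` is quasi-invertible: there is `y` with `x ∘ y = y ∘ x = 0`
where `x ∘ y = x + y - x*y`. -/
def IsQuasiInv {A : Type*} [NonUnitalRing A] (x : A) : Prop :=
  ∃ y, x + y - x * y = 0 ∧ y + x - y * x = 0

theorem isQuasiInv_zero {A : Type*} [NonUnitalRing A] : IsQuasiInv (0 : A) :=
  ⟨0, by simp, by simp⟩

theorem IsQuasiInv.isUnit_one_sub_map {A R F : Type*} [NonUnitalRing A] [Ring R]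
    [FunLike F A R] [NonUnitalRingHomClass F A R] (f : F) {x : A} (hx : IsQuasiInv x) :
    IsUnit (1 - f x) := by
  obtain ⟨y, hxy, hyx⟩ := hx
  have key : ∀ a b : A, (1 - f a) * (1 - f b) = 1 - f (a + b - a * b) := fun a b => by
    simp only [map_sub, map_add, map_mul]; noncomm_ring
  exact ⟨⟨1 - f x, 1 - f y, by rw [key, hxy, map_zero, sub_zero],
    by rw [key, hyx, map_zero, sub_zero]⟩, rfl⟩

theorem spectrum.notMem_of_isUnit_one_sub_inv_smul {𝕜 R : Type*} [Field 𝕜] [Ring R] [Algebra 𝕜 R]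
    {z : 𝕜} (hz : z ≠ 0) {a : R} (h : IsUnit (1 - z⁻¹ • a)) : z ∉ spectrum 𝕜 a := by
  rw [spectrum.notMem_iff, Algebra.algebraMap_eq_smul_one,
    show z • (1 : R) - a = z • (1 - z⁻¹ • a) by rw [smul_sub, smul_inv_smul₀ hz]]
  exact h.smul (Units.mk0 z hz)

theorem spectrum.spectralRadius_eq_nnnorm_of_nnnorm_pow_two_pow {C : Type*} [NormedRing C]
    [NormedAlgebra ℂ C] [CompleteSpace C] {a : C} (h : ∀ n : ℕ, ‖a ^ 2 ^ n‖₊ = ‖a‖₊ ^ 2 ^ n) :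
    spectralRadius ℂ a = ‖a‖₊ := by
  refine tendsto_nhds_unique (f := fun _ : ℕ => _) (l := Filter.atTop) ?_ tendsto_const_nhds
  convert (spectrum.pow_nnnorm_pow_one_div_tendsto_nhds_spectralRadius a).comp
    (tendsto_pow_atTop_atTop_of_one_lt one_lt_two) using 1
  refine funext fun n => ?_
  rw [Function.comp_apply, h, ENNReal.coe_pow, ← ENNReal.rpow_natCast, ← ENNReal.rpow_mul]
  simp

theorem RegularNormedAlgebra.of_norm_mul_self {𝕜 R : Type*} [NontriviallyNormedField 𝕜]
    [NonUnitalSeminormedRing R] [NormedSpace 𝕜 R] [IsScalarTower 𝕜 R R] [SMulCommClass 𝕜 R R]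
    (h : ∀ x : R, ‖x * x‖ = ‖x‖ * ‖x‖) : RegularNormedAlgebra 𝕜 R := by
  refine ⟨AddMonoidHomClass.isometry_of_norm _ fun x => ?_⟩
  refine le_antisymm (ContinuousLinearMap.opNorm_mul_apply_le 𝕜 R x) ?_
  rcases (norm_nonneg x).eq_or_lt with hx | hx
  · exact hx ▸ norm_nonneg _
  · have := (ContinuousLinearMap.mul 𝕜 R x).le_opNorm x
    rw [ContinuousLinearMap.mul_apply', h] at this
    exact le_of_mul_le_mul_right this hx

instance UniformSpace.Completion.instNontrivial {α : Type*} [UniformSpace α] [T0Space α]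
    [Nontrivial α] : Nontrivial (Completion α) :=
  (Completion.coe_injective α).nontrivial

namespace SeparationQuotient

variable {R M : Type*} [TopologicalSpace M] [Mul M] [ContinuousMul M] [SMul R M]
  [ContinuousConstSMul R M]

instance instSMulCommClassSelf [SMulCommClass R M M] :
    SMulCommClass R (SeparationQuotient M) (SeparationQuotient M) where
  smul_comm c := surjective_mk.forall₂.2 fun a b => by
    simp only [smul_eq_mul, ← mk_smul, ← mk_mul, mul_smul_comm]

instance instIsScalarTowerSelf [IsScalarTower R M M] :
    IsScalarTower R (SeparationQuotient M) (SeparationQuotient M) where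
  smul_assoc c := surjective_mk.forall₂.2 fun a b => by
    simp only [smul_eq_mul, ← mk_smul, ← mk_mul, smul_mul_assoc]

end SeparationQuotient

noncomputable instance Unitization.instNormedCommRing {𝕜 A : Type*} [NontriviallyNormedField 𝕜]
    [NonUnitalNormedCommRing A] [NormedSpace 𝕜 A] [IsScalarTower 𝕜 A A] [SMulCommClass 𝕜 A A]
    [RegularNormedAlgebra 𝕜 A] : NormedCommRing (Unitization 𝕜 A) where
  mul_comm := mul_comm

section

variable (𝕜 A : Type*) [NontriviallyNormedField 𝕜] [NonUnitalSeminormedCommRing A]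
  [NormedSpace 𝕜 A] [IsScalarTower 𝕜 A A] [SMulCommClass 𝕜 A A]
  [RegularNormedAlgebra 𝕜 (SeparationQuotient A)]

noncomputable def toCompletionUnitization :
    A →ₙₐ[𝕜] Completion (Unitization 𝕜 (SeparationQuotient A)) where
  toFun a := (Unitization.inr (SeparationQuotient.mk a) : Unitization 𝕜 (SeparationQuotient A))
  map_smul' c a := by
    simp only [SeparationQuotient.mk_smul, Unitization.inr_smul, Completion.coe_smul,
      MonoidHom.id_apply]
  map_zero' := by
    simp only [SeparationQuotient.mk_zero, Unitization.inr_zero, Completion.coe_zero]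
  map_add' a b := by simp only [SeparationQuotient.mk_add, Unitization.inr_add, Completion.coe_add]
  map_mul' a b := by simp only [SeparationQuotient.mk_mul, Unitization.inr_mul, Completion.coe_mul]

variable {𝕜 A}

@[simp]
theorem norm_toCompletionUnitization (a : A) : ‖toCompletionUnitization 𝕜 A a‖ = ‖a‖ :=
  (Completion.norm_coe _).trans <| (Unitization.norm_inr _).trans (SeparationQuotient.norm_mk a)

end

theorem exists_norm_eq_not_isQuasiInv_inv_smul {A : Type*} [NonUnitalSeminormedCommRing A]
    [NormedSpace ℂ A] [IsScalarTower ℂ A A] [SMulCommClass ℂ A A]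
    (hsq : ∀ x : A, ‖x * x‖ = ‖x‖ * ‖x‖) {x : A} (hx : ‖x‖ ≠ 0) :
    ∃ z : ℂ, ‖z‖ = ‖x‖ ∧ ¬IsQuasiInv (z⁻¹ • x) := by
  have : RegularNormedAlgebra ℂ (SeparationQuotient A) := .of_norm_mul_self <|
    SeparationQuotient.surjective_mk.forall.2 fun a => by
      rw [← SeparationQuotient.mk_mul, SeparationQuotient.norm_mk, SeparationQuotient.norm_mk, hsq]
  set φ := toCompletionUnitization ℂ A
  have hφ : ∀ a, ‖φ a‖ = ‖a‖ := norm_toCompletionUnitization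
  have hpow : ∀ (n : ℕ) (a : A), ‖φ a ^ 2 ^ n‖ = ‖a‖ ^ 2 ^ n := by
    intro n
    induction n with
    | zero => simpa using hφ
    | succ n ih =>
      intro a
      rw [pow_succ', pow_mul, sq, ← map_mul, ih, hsq, ← sq, ← pow_mul]
  obtain ⟨z, hz, hz_norm⟩ := spectrum.exists_nnnorm_eq_spectralRadius (φ x)
  rw [spectrum.spectralRadius_eq_nnnorm_of_nnnorm_pow_two_pow fun n => by
    ext; simp only [coe_nnnorm, NNReal.coe_pow, hpow, hφ]] at hz_norm
  have hz_norm' : ‖z‖ = ‖x‖ := by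
    simpa [hφ] using congrArg NNReal.toReal (ENNReal.coe_injective hz_norm)
  have hz0 : z ≠ 0 := by
    rintro rfl
    exact hx (by simpa using hz_norm'.symm)
  refine ⟨z, hz_norm', fun hq => spectrum.notMem_of_isUnit_one_sub_inv_smul hz0 ?_ hz⟩
  simpa only [map_smul] using hq.isUnit_one_sub_map φ

theorem WithSeminorms.withSeminorms_finset_sup {𝕜 E ι ι' : Type*} [NormedField 𝕜]
    [AddCommGroup E] [Module 𝕜 E] [TopologicalSpace E] [Nonempty ι'] {p : SeminormFamily 𝕜 E ι}
    (hp : WithSeminorms p) {s : Finset ι} {ε : ℝ} (hε : 0 < ε)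
    (h : ∀ i x, ε * p i x ≤ s.sup p x) : WithSeminorms fun _ : ι' => s.sup p := by
  refine hp.congr (.of_real fun _ => ⟨s, 1, fun x => (one_mul _).ge⟩)
    ((Seminorm.const_isBounded ι' _).2 fun i => ⟨⟨ε⁻¹, (inv_pos.2 hε).le⟩, fun x => ?_⟩)
  change p i x ≤ ε⁻¹ * s.sup p x
  rw [le_inv_mul_iff₀ hε]
  exact h i x

structure Seminorm.IsUniform {𝕜 A : Type*} [SeminormedRing 𝕜] [NonUnitalRing A] [SMul 𝕜 A]
    (p : Seminorm 𝕜 A) : Prop where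
  map_mul_le : ∀ x y, p (x * y) ≤ p x * p y
  map_mul_self : ∀ x, p (x * x) = p x * p x

namespace Seminorm.IsUniform

theorem finset_sup {𝕜 A ι : Type*} [NormedField 𝕜] [NonUnitalRing A] [Module 𝕜 A]
    {p : ι → Seminorm 𝕜 A} (hp : ∀ i, (p i).IsUniform) (s : Finset ι) : (s.sup p).IsUniform := by
  have map_mul_le : ∀ x y, s.sup p (x * y) ≤ s.sup p x * s.sup p y := fun x y =>
    finset_sup_apply_le (mul_nonneg (apply_nonneg _ _) (apply_nonneg _ _)) fun i hi =>
      ((hp i).map_mul_le x y).trans <| mul_le_mul (le_finset_sup_apply hi)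
        (le_finset_sup_apply hi) (apply_nonneg _ _) (apply_nonneg _ _)
  refine ⟨map_mul_le, fun x => (map_mul_le x x).antisymm ?_⟩
  rcases zero_or_exists_apply_eq_finset_sup p s x with hx | ⟨i, hi, hx⟩
  · rw [hx, mul_zero]
    exact apply_nonneg _ _
  · rw [hx, ← (hp i).map_mul_self]
    exact le_finset_sup_apply hi

variable {A : Type*} [NonUnitalCommRing A] [Module ℂ A] [IsScalarTower ℂ A A]
  [SMulCommClass ℂ A A] {p : Seminorm ℂ A}

theorem exists_norm_eq_not_isQuasiInv_inv_smul (hp : p.IsUniform) {x : A} (hx : p x ≠ 0) :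
    ∃ z : ℂ, ‖z‖ = p x ∧ ¬IsQuasiInv (z⁻¹ • x) := by
  let : NonUnitalSeminormedCommRing A :=
    { ‹NonUnitalCommRing A›, p.toAddGroupSeminorm.toSeminormedAddCommGroup with
      norm_mul_le := hp.map_mul_le }
  let : NormedSpace ℂ A := ⟨fun c y => (map_smul_eq_mul p c y).le⟩
  exact _root_.exists_norm_eq_not_isQuasiInv_inv_smul hp.map_mul_self hx

theorem mul_le_of_ball_subset (hp : p.IsUniform) {q : Seminorm ℂ A} {ε : ℝ}
    (hq : q.ball 0 ε ⊆ {x | IsQuasiInv x}) (x : A) : ε * p x ≤ q x := by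
  rcases (apply_nonneg p x).eq_or_lt' with hx | hx
  · rw [hx, mul_zero]
    exact apply_nonneg q x
  obtain ⟨z, hz, hzx⟩ := hp.exists_norm_eq_not_isQuasiInv_inv_smul hx.ne'
  have hε : ε ≤ q (z⁻¹ • x) := not_lt.1 fun h => hzx (hq ((q.mem_ball_zero).2 h))
  rwa [map_smul_eq_mul, norm_inv, hz, inv_mul_eq_div, le_div_iff₀ hx] at hε

end Seminorm.IsUniform

theorem uniform_norm_of_uT_qAlgebra_general {A : Type*} [NonUnitalCommRing A]
    [Module ℂ A] [SMulCommClass ℂ A A] [IsScalarTower ℂ A A]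
    [TopologicalSpace A] [T2Space A]
    {ι : Type*} (P : SeminormFamily ℂ A ι) (hP : WithSeminorms P)
    (hPmul : ∀ i x y, P i (x * y) ≤ P i x * P i y)
    (hPsq : ∀ i x, P i (x * x) = P i x * P i x)
    (hQ : IsOpen {x : A | IsQuasiInv x}) :
    ∃ Q : Seminorm ℂ A,
      (∀ x, Q x = 0 → x = 0) ∧
      (∀ x y, Q (x * y) ≤ Q x * Q y) ∧
      (∀ x, Q (x * x) = Q x * Q x) ∧
      WithSeminorms (fun _ : Fin 1 => Q) := by
  have hU : ∀ i, (P i).IsUniform := fun i => ⟨hPmul i, hPsq i⟩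
  obtain ⟨s, ε, hε, hball⟩ := (hP.mem_nhds_iff 0 _).1 (hQ.mem_nhds isQuasiInv_zero)
  have hdom : ∀ i x, ε * P i x ≤ s.sup P x := fun i => (hU i).mul_le_of_ball_subset hball
  have hsup := Seminorm.IsUniform.finset_sup hU s
  refine ⟨s.sup P, fun x hx => ?_, hsup.map_mul_le, hsup.map_mul_self,
    hP.withSeminorms_finset_sup hε hdom⟩
  by_contra hx0
  obtain ⟨i, hi⟩ := hP.separating_of_T1 x hx0
  have hPx : ε * P i x ≤ 0 := hx ▸ hdom i x
  exact hi (le_antisymm (nonpos_of_mul_nonpos_right hPx hε) (apply_nonneg _ _))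

/-- Let `A` be a commutative complex Hausdorff topological algebra whose topology is
induced by a family `P` of uniform seminorms, and suppose `A` is a Q-algebra (its set
of quasi-invertible elements is open). Then the topology of `A` is induced by a single
uniform norm; in particular `A` is a uniform normed algebra. -/
theorem uniform_norm_of_uT_qAlgebra {A : Type*} [NonUnitalCommRing A]
    [Module ℂ A] [SMulCommClass ℂ A A] [IsScalarTower ℂ A A]
    [TopologicalSpace A] [T2Space A]
    {ι : Type*} [Nonempty ι] (P : SeminormFamily ℂ A ι) (hP : WithSeminorms P)
    (hPmul : ∀ i x y, P i (x * y) ≤ P i x * P i y)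
    (hPsq : ∀ i x, P i (x * x) = P i x * P i x)
    (hQ : IsOpen {x : A | IsQuasiInv x}) :
    ∃ Q : Seminorm ℂ A,
      (∀ x, Q x = 0 → x = 0) ∧
      (∀ x y, Q (x * y) ≤ Q x * Q y) ∧
      (∀ x, Q (x * x) = Q x * Q x) ∧
      WithSeminorms (fun _ : Fin 1 => Q) :=
  uniform_norm_of_uT_qAlgebra_general P hP hPmul hPsq hQ
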